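/- arXiv:2603.23193 — 3 statements merged into one kernel-verified Lean document; each statement's English description precedes it below -/
import Mathlib

section
/- Let T be a ditree and let S be a source set or a sink set of T of size at least 2 that contains no leaf of T. Suppose M is a minimum geodetic set of T that contains exactly one vertex of S. Then the set N obtained from M by replacing the unique vertex of M ∩ S by any other vertex of S is also a minimum geodetic set of T. -/
/-!
Reversing every arc turns sink sets into source sets and preserves intervals up to swapping
their ends, so let `S` be a source set. No arc enters `S`, hence a directed walk that leaves `S`
never returns; and since the underlying graph is a tree, a walk is a geodesic exactly when it
repeats no vertex.

A vertex `z ∉ S` lies on the path between some `u, v ∈ M`, with `v ∉ S`. If `u ∈ S`, walk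
inside the strongly connected `S` from `y` to the vertex where that path leaves `S` and
follow the path from there on: the result is again a path, through `z`, from `y` to `v`.
A vertex `z ∈ S` is reached from `y` by a path inside `S`; extend it inside `S` as far as
possible, to some `ℓ`. Every neighbour of `ℓ` in `S` must then be its predecessor on the path,
so the non-leaf `ℓ` has a neighbour `a ∉ S`, necessarily an out-neighbour. Continuing along
the geodesic of `M` through `a` ends at a vertex of `M \ S`. So the new set is geodetic, and it
is no larger than `M`.
-/

namespace GeoPaper

variable {V : Type*}

/-- A directed walk from `u` to `v` in the digraph with arc relation `D`,
represented by the list of its vertices. -/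
def IsWalk (D : V → V → Prop) (u v : V) (p : List V) : Prop :=
  p.Chain' D ∧ p.head? = some u ∧ p.getLast? = some v

/-- `interval D u v` is the set of vertices lying on some shortest directed
path from `u` to `v` (i.e. a directed walk of minimum length from `u` to `v`). -/
def interval (D : V → V → Prop) (u v : V) : Set V :=
  {x | ∃ p, IsWalk D u v p ∧ (∀ q, IsWalk D u v q → p.length ≤ q.length) ∧ x ∈ p}

/-- `S` is a geodetic set of the digraph `D`: every vertex lies on a shortest
directed path between two vertices of `S`. -/
def IsGeodetic (D : V → V → Prop) (S : Set V) : Prop :=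
  ∀ x, ∃ u ∈ S, ∃ v ∈ S, x ∈ interval D u v

/-- `S` is a geodetic set of minimum cardinality. -/
def IsMinGeodetic (D : V → V → Prop) (S : Set V) : Prop :=
  IsGeodetic D S ∧ ∀ T : Set V, IsGeodetic D T → S.ncard ≤ T.ncard

/-- a source: no incoming arcs. -/
def IsSource (D : V → V → Prop) (v : V) : Prop := ∀ u, ¬ D u v

/-- a sink: no outgoing arcs. -/
def IsSink (D : V → V → Prop) (v : V) : Prop := ∀ u, ¬ D v u

/-- an extremal vertex: a source or a sink. -/
def Extremal (D : V → V → Prop) (v : V) : Prop := IsSource D v ∨ IsSink D v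

/-- the digraph `D` has no directed 2-cycle (an oriented graph). -/
def NoTwoCycle (D : V → V → Prop) : Prop := ∀ u v, D u v → ¬ D v u

/-- the underlying undirected simple graph of a digraph. -/
def underlying (D : V → V → Prop) : SimpleGraph V where
  Adj u v := u ≠ v ∧ (D u v ∨ D v u)
  symm := ⟨fun u v h => ⟨h.1.symm, h.2.symm⟩⟩
  loopless := ⟨fun v h => h.1 rfl⟩

/-- a leaf: a vertex of degree 1 in the underlying undirected graph. -/
def IsLeaf (D : V → V → Prop) (v : V) : Prop := ((underlying D).neighborSet v).ncard = 1

/-- a ditree: a digraph whose underlying undirected graph is a tree. -/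
def IsDitree (D : V → V → Prop) : Prop := (∀ v, ¬ D v v) ∧ (underlying D).IsTree

/-- reachability by directed paths. -/
def Reach (D : V → V → Prop) : V → V → Prop := Relation.ReflTransGen D

/-- `S` is a maximal strongly connected component of `D`. -/
def IsSCC (D : V → V → Prop) (S : Set V) : Prop :=
  S.Nonempty ∧ (∀ u ∈ S, ∀ v ∈ S, Reach D u v) ∧
    ∀ T : Set V, S ⊆ T → (∀ u ∈ T, ∀ v ∈ T, Reach D u v) → T ⊆ S

/-- a source set: a maximal strongly connected component no arc enters from outside. -/
def IsSourceSet (D : V → V → Prop) (S : Set V) : Prop :=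
  IsSCC D S ∧ ∀ u v, v ∈ S → D u v → u ∈ S

/-- a sink set: a maximal strongly connected component no arc leaves. -/
def IsSinkSet (D : V → V → Prop) (S : Set V) : Prop :=
  IsSCC D S ∧ ∀ u v, u ∈ S → D u v → v ∈ S

/-- a transitive vertex. -/
def IsTransitiveVertex (D : V → V → Prop) (v : V) : Prop :=
  ∀ u1 u2, D u1 v → D v u2 → D u1 u2 ∨ u1 = u2

def IsGeodesic (D : V → V → Prop) (u v : V) (p : List V) : Prop :=
  IsWalk D u v p ∧ ∀ q, IsWalk D u v q → p.length ≤ q.length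

section Walks

variable {D : V → V → Prop} {u v a b z : V} {p q : List V}

lemma isWalk_iff : IsWalk D u v p ↔ p.IsChain D ∧ p.head? = some u ∧ p.getLast? = some v :=
  Iff.rfl

lemma IsWalk.ne_nil (h : IsWalk D u v p) : p ≠ [] := by
  rintro rfl; simp [IsWalk] at h

lemma isWalk_singleton (u : V) : IsWalk D u u [u] := ⟨List.isChain_singleton u, rfl, rfl⟩

lemma IsWalk.head_eq (h : IsWalk D u v p) (hne : p ≠ []) : p.head hne = u :=
  Option.some_injective _ ((List.head?_eq_some_head hne).symm.trans h.2.1)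

lemma IsWalk.getLast_eq (h : IsWalk D u v p) (hne : p ≠ []) : p.getLast hne = v :=
  Option.some_injective _ ((List.getLast?_eq_some_getLast hne).symm.trans h.2.2)

lemma IsWalk.getLast_mem (h : IsWalk D u v p) : v ∈ p :=
  List.mem_of_getLast? h.2.2

lemma isWalk_cons_cons : IsWalk D u v (a :: b :: p) ↔ a = u ∧ D a b ∧ IsWalk D b v (b :: p) := by
  simp only [isWalk_iff, List.isChain_cons_cons, List.head?_cons, Option.some.injEq]
  tauto

lemma isWalk_append_cons :
    IsWalk D u v (p ++ a :: q) ↔ IsWalk D u a (p ++ [a]) ∧ IsWalk D a v (a :: q) := by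
  have hhead : (p ++ a :: q).head? = (p ++ [a]).head? := by simp only [List.head?_append]; rfl
  have hlast : (p ++ a :: q).getLast? = (a :: q).getLast? :=
    List.getLast?_append_of_ne_nil _ (List.cons_ne_nil a q)
  rw [isWalk_iff, List.isChain_split, hhead, hlast]
  simp only [isWalk_iff, List.getLast?_concat, List.head?_cons]
  tauto

lemma IsWalk.append (hp : IsWalk D u a p) (hq : IsWalk D b v q) (hab : D a b) :
    IsWalk D u v (p ++ q) := by
  obtain ⟨hpc, hph, hpl⟩ := hp
  obtain ⟨hqc, hqh, hql⟩ := hq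
  refine ⟨List.isChain_append.2 ⟨hpc, hqc, by simp_all⟩, ?_, ?_⟩
  · simp [List.head?_append, hph]
  · simp [List.getLast?_append, hql]

lemma exists_isWalk_of_reach (h : Reach D u v) : ∃ p, IsWalk D u v p := by
  obtain ⟨l, hl, hlast⟩ := List.exists_isChain_cons_of_relationReflTransGen h
  exact ⟨u :: l, hl, rfl, by rw [List.getLast?_eq_some_getLast (List.cons_ne_nil u l), hlast]⟩

lemma IsWalk.exists_isGeodesic (h : IsWalk D u v p) : ∃ q, IsGeodesic D u v q := by
  classical
  have hex : ∃ n, ∃ q, IsWalk D u v q ∧ q.length = n := ⟨_, p, h, rfl⟩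
  obtain ⟨q, hq, hlen⟩ := Nat.find_spec hex
  exact ⟨q, hq, fun r hr => hlen ▸ Nat.find_min' hex ⟨r, hr, rfl⟩⟩

lemma IsGeodesic.nodup (hp : IsGeodesic D u v p) : p.Nodup := by
  by_contra hnd
  obtain ⟨a, ha⟩ := List.exists_duplicate_iff_not_nodup.2 hnd
  obtain ⟨r₁, r₂, rfl, ha₁, ha₂⟩ := List.cons_sublist_iff.1 (List.duplicate_iff_sublist.1 ha)
  obtain ⟨s, t, rfl⟩ := List.append_of_mem ha₁
  obtain ⟨s', t', rfl⟩ := List.append_of_mem (List.singleton_sublist.1 ha₂)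
  have hshort : IsWalk D u v (s ++ a :: t') := by
    have hwalk : IsWalk D u v (s ++ a :: (t ++ s' ++ a :: t')) := by simpa using hp.1
    obtain ⟨hpre, hsuf⟩ := isWalk_append_cons.1 hwalk
    rw [show a :: (t ++ s' ++ a :: t') = a :: (t ++ s') ++ a :: t' by simp,
      isWalk_append_cons] at hsuf
    exact isWalk_append_cons.2 ⟨hpre, hsuf.2⟩
  have := hp.2 _ hshort
  simp only [List.append_assoc, List.cons_append, List.length_append, List.length_cons] at this
  omega

lemma mem_interval_iff_exists_isGeodesic :
    z ∈ interval D u v ↔ ∃ p, IsGeodesic D u v p ∧ z ∈ p := by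
  simp [interval, IsGeodesic, and_assoc]

lemma exists_nodup_isWalk_of_reach (h : Reach D u v) : ∃ p, IsWalk D u v p ∧ p.Nodup := by
  obtain ⟨p, hp⟩ := exists_isWalk_of_reach h
  obtain ⟨q, hq⟩ := hp.exists_isGeodesic
  exact ⟨q, hq.1, hq.nodup⟩

end Walks

section Ditree

variable {D : V → V → Prop} {u v w z : V} {p q : List V}

lemma underlying_adj_of_arc (hD : ∀ w, ¬ D w w) (h : D u v) : (underlying D).Adj u v :=
  ⟨fun he => hD u (he ▸ h), Or.inl h⟩

lemma IsWalk.exists_support_eq (hD : ∀ w, ¬ D w w) (h : IsWalk D u v p) :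
    ∃ w : (underlying D).Walk u v, w.support = p := by
  induction p generalizing u with
  | nil => exact absurd rfl h.ne_nil
  | cons b t ih =>
    cases t with
    | nil =>
      obtain ⟨-, hu, hv⟩ := h
      obtain rfl : b = u := by simpa using hu
      obtain rfl : b = v := by simpa using hv
      exact ⟨.nil, rfl⟩
    | cons c t =>
      obtain ⟨rfl, hbc, hw⟩ := isWalk_cons_cons.1 h
      obtain ⟨w, hw⟩ := ih hw
      exact ⟨.cons (underlying_adj_of_arc hD hbc) w, by simp [hw]⟩

namespace IsDitree

lemma eq_support_of_isPath (hT : IsDitree D) (hp : IsWalk D u v p) (hpn : p.Nodup)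
    {w : (underlying D).Walk u v} (hw : w.IsPath) : p = w.support := by
  obtain ⟨wp, rfl⟩ := hp.exists_support_eq hT.1
  have := hT.2.isAcyclic.subsingleton_path u v
  have hpath : (⟨wp, wp.isPath_def.2 hpn⟩ : (underlying D).Path u v) = ⟨w, hw⟩ :=
    Subsingleton.elim _ _
  rw [Subtype.mk.injEq] at hpath
  rw [hpath]

lemma eq_of_isWalk_of_nodup (hT : IsDitree D) (hp : IsWalk D u v p) (hpn : p.Nodup)
    (hq : IsWalk D u v q) (hqn : q.Nodup) : p = q := by
  obtain ⟨wq, rfl⟩ := hq.exists_support_eq hT.1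
  exact hT.eq_support_of_isPath hp hpn (wq.isPath_def.2 hqn)

lemma isGeodesic_iff (hT : IsDitree D) : IsGeodesic D u v p ↔ IsWalk D u v p ∧ p.Nodup := by
  refine ⟨fun hp => ⟨hp.1, hp.nodup⟩, fun ⟨hp, hpn⟩ => ?_⟩
  obtain ⟨q, hq⟩ := hp.exists_isGeodesic
  rwa [hT.eq_of_isWalk_of_nodup hp hpn hq.1 hq.nodup]

lemma mem_interval_iff (hT : IsDitree D) :
    z ∈ interval D u v ↔ ∃ p, IsWalk D u v p ∧ p.Nodup ∧ z ∈ p := by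
  simp only [mem_interval_iff_exists_isGeodesic, hT.isGeodesic_iff, and_assoc]

lemma arc_of_adj_of_reach (hT : IsDitree D) (hadj : (underlying D).Adj u v) (h : Reach D u v) :
    D u v := by
  obtain ⟨p, hp, hpn⟩ := exists_nodup_isWalk_of_reach h
  obtain rfl : p = [u, v] := by
    simpa using hT.eq_support_of_isPath hp hpn (SimpleGraph.Path.singleton hadj).2
  exact List.isChain_pair.1 hp.1

lemma getLast?_dropLast_eq (hT : IsDitree D) (hp : IsWalk D u v p) (hpn : p.Nodup) (hw : w ∈ p)
    (hwv : D w v) : p.dropLast.getLast? = some w := by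
  obtain ⟨s, t, rfl⟩ := List.append_of_mem hw
  have hedge : IsWalk D w v [w, v] := ⟨List.isChain_pair.2 hwv, rfl, rfl⟩
  have hne : w ≠ v := fun h => hT.1 w (h ▸ hwv)
  obtain rfl : t = [v] := List.cons_injective (hT.eq_of_isWalk_of_nodup (isWalk_append_cons.1 hp).2
    (List.nodup_append.1 hpn).2.1 hedge (by simp [hne]))
  simp

lemma neighborSet_nontrivial (hT : IsDitree D) [Nontrivial V] (hv : ¬ IsLeaf D v) :
    ((underlying D).neighborSet v).Nontrivial := by
  obtain ⟨w, hw⟩ := hT.2.connected.preconnected.exists_adj_of_nontrivial v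
  have hne : ((underlying D).neighborSet v).Nonempty := ⟨w, hw⟩
  refine hne.exists_eq_singleton_or_nontrivial.resolve_left ?_
  rintro ⟨a, ha⟩
  exact hv (by simp [IsLeaf, ha])

end IsDitree

end Ditree

section InClosed

variable {D : V → V → Prop} {S : Set V} {u v a g y z : V} {p q r : List V}

lemma IsWalk.mem_of_getLast_mem (hSin : ∀ u v, v ∈ S → D u v → u ∈ S) (hp : IsWalk D u v p)
    (hv : v ∈ S) (ha : a ∈ p) : a ∈ S :=
  hp.1.backwards_induction (· ∈ S) p (fun x y hxy hy => hSin x y hy hxy)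
    (fun hne => hp.getLast_eq hne ▸ hv) a ha

lemma IsWalk.notMem_of_head_notMem (hSin : ∀ u v, v ∈ S → D u v → u ∈ S) (hp : IsWalk D u v p)
    (hu : u ∉ S) (ha : a ∈ p) : a ∉ S :=
  hp.1.induction (· ∉ S) p (fun x y hxy hx hy => hx (hSin x y hy hxy))
    (fun hne => hp.head_eq hne ▸ hu) a ha

lemma IsWalk.exists_exit (hp : IsWalk D u v p) (hu : u ∈ S) (hz : z ∈ p) (hzS : z ∉ S) :
    ∃ g ∈ S, ∃ a ∉ S, D g a ∧ ∃ q, IsWalk D a v q ∧ q <:+ p ∧ z ∈ q := by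
  induction p generalizing u with
  | nil => exact absurd rfl hp.ne_nil
  | cons b t ih =>
    obtain rfl : b = u := by simpa using hp.2.1
    have hzt : z ∈ t := (List.mem_cons.1 hz).resolve_left fun h => hzS (h ▸ hu)
    cases t with
    | nil => simp at hzt
    | cons c t =>
      obtain ⟨-, hbc, hw⟩ := isWalk_cons_cons.1 hp
      by_cases hc : c ∈ S
      · obtain ⟨g, hg, a, ha, hga, q, hq, hsuf, hzq⟩ := ih hw hc hzt
        exact ⟨g, hg, a, ha, hga, q, hq, hsuf.trans (List.suffix_cons _ _), hzq⟩
      · exact ⟨b, hu, c, hc, hbc, c :: t, hw, List.suffix_cons _ _, hzt⟩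

lemma nodup_append_of_exit (hSin : ∀ u v, v ∈ S → D u v → u ∈ S) (hr : IsWalk D y g r)
    (hg : g ∈ S) (hq : IsWalk D a v q) (ha : a ∉ S) (hrn : r.Nodup) (hqn : q.Nodup) :
    (r ++ q).Nodup :=
  List.nodup_append.2 ⟨hrn, hqn, fun _ hb _ hc hbc =>
    hq.notMem_of_head_notMem hSin ha hc (hbc ▸ hr.mem_of_getLast_mem hSin hg hb)⟩

lemma _root_.List.Nodup.length_le_ncard (hq : q.Nodup) (hqS : ∀ a ∈ q, a ∈ S) (hS : S.Finite) :
    q.length ≤ S.ncard := by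
  classical
  rw [← List.toFinset_card_of_nodup hq, ← Set.ncard_coe_finset]
  exact Set.ncard_le_ncard (fun a ha => hqS a (by simpa using ha)) hS

lemma exists_longest_of_nodup_subset (hS : S.Finite) {P : List V → Prop} (hP : ∃ q, P q)
    (hPS : ∀ q, P q → q.Nodup ∧ ∀ a ∈ q, a ∈ S) :
    ∃ q, P q ∧ ∀ q', P q' → q'.length ≤ q.length := by
  obtain ⟨q₀, hq₀⟩ := hP
  set L := {n | ∃ q, P q ∧ q.length = n}
  have hbdd : BddAbove L := ⟨S.ncard, by
    rintro _ ⟨q, hq, rfl⟩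
    exact (hPS q hq).1.length_le_ncard (hPS q hq).2 hS⟩
  obtain ⟨q, hq, hlen⟩ := Nat.sSup_mem (s := L) ⟨_, q₀, hq₀, rfl⟩ hbdd
  exact ⟨q, hq, fun q' hq' => hlen ▸ le_csSup hbdd ⟨q', hq', rfl⟩⟩

end InClosed

section Replace

variable {D : V → V → Prop} {S M : Set V} {x y z ℓ : V} {q : List V}

lemma exists_arc_notMem_of_maximal (hT : IsDitree D) (hSc : ∀ u ∈ S, ∀ v ∈ S, Reach D u v)
    (hSin : ∀ u v, v ∈ S → D u v → u ∈ S) (hℓ : ℓ ∈ S)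
    (hnt : ((underlying D).neighborSet ℓ).Nontrivial) (hq : IsWalk D y ℓ q) (hqn : q.Nodup)
    (hmax : ∀ w ∈ S, D ℓ w → w ∈ q) : ∃ a ∉ S, D ℓ a := by
  by_contra! hout
  have hpen : ∀ w ∈ (underlying D).neighborSet ℓ, q.dropLast.getLast? = some w := by
    intro w hw
    have hwS : w ∈ S := by
      by_contra hwS
      exact hw.2.elim (hout w hwS) fun h => hwS (hSin w ℓ hℓ h)
    exact hT.getLast?_dropLast_eq hq hqn (hmax w hwS (hT.arc_of_adj_of_reach hw (hSc ℓ hℓ w hwS)))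
      (hT.arc_of_adj_of_reach hw.symm (hSc w hwS ℓ hℓ))
  obtain ⟨a, ha, b, hb, hab⟩ := hnt
  exact hab (Option.some_injective _ ((hpen a ha).symm.trans (hpen b hb)))

lemma exists_maximal_isWalk_through (hS : S.Finite) (hSc : ∀ u ∈ S, ∀ v ∈ S, Reach D u v)
    (hSin : ∀ u v, v ∈ S → D u v → u ∈ S) (hy : y ∈ S) (hz : z ∈ S) :
    ∃ ℓ ∈ S, ∃ q, IsWalk D y ℓ q ∧ q.Nodup ∧ z ∈ q ∧ ∀ w ∈ S, D ℓ w → w ∈ q := by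
  obtain ⟨q₀, hq₀, hq₀n⟩ := exists_nodup_isWalk_of_reach (hSc y hy z hz)
  obtain ⟨q, ⟨ℓ, hℓ, hq, hqn, hzq⟩, hlongest⟩ := exists_longest_of_nodup_subset hS
    (P := fun q => ∃ ℓ ∈ S, IsWalk D y ℓ q ∧ q.Nodup ∧ z ∈ q)
    ⟨q₀, z, hz, hq₀, hq₀n, hq₀.getLast_mem⟩
    (fun q ⟨ℓ, hℓ, hq, hqn, _⟩ => ⟨hqn, fun a ha => hq.mem_of_getLast_mem hSin hℓ ha⟩)
  refine ⟨ℓ, hℓ, q, hq, hqn, hzq, fun w hw hℓw => ?_⟩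
  by_contra hwq
  have := hlongest (q ++ [w]) ⟨w, hw, hq.append (isWalk_singleton w) hℓw,
    by simpa using hqn.concat hwq, List.mem_append_left _ hzq⟩
  simp at this

lemma exists_isWalk_through_of_mem (hT : IsDitree D) (hSc : ∀ u ∈ S, ∀ v ∈ S, Reach D u v)
    (hSin : ∀ u v, v ∈ S → D u v → u ∈ S) (hS2 : 2 ≤ S.ncard) (hnoleaf : ∀ v ∈ S, ¬ IsLeaf D v)
    (hM : IsGeodetic D M) (hy : y ∈ S) (hz : z ∈ S) :
    ∃ v ∈ M, v ∉ S ∧ ∃ p, IsWalk D y v p ∧ p.Nodup ∧ z ∈ p := by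
  obtain ⟨hSnt, hSfin⟩ := Set.one_lt_ncard_iff_nontrivial_and_finite.1 hS2
  have := Set.nontrivial_of_nontrivial hSnt
  obtain ⟨ℓ, hℓ, q, hq, hqn, hzq, hmax⟩ := exists_maximal_isWalk_through hSfin hSc hSin hy hz
  obtain ⟨a, ha, hℓa⟩ := exists_arc_notMem_of_maximal hT hSc hSin hℓ
    (hT.neighborSet_nontrivial (hnoleaf ℓ hℓ)) hq hqn hmax
  obtain ⟨_, _, v, hv, hav⟩ := hM a
  obtain ⟨p, hp, hpn, hap⟩ := hT.mem_interval_iff.1 hav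
  obtain ⟨s, t, rfl⟩ := List.append_of_mem hap
  have hat : IsWalk D a v (a :: t) := (isWalk_append_cons.1 hp).2
  exact ⟨v, hv, hat.notMem_of_head_notMem hSin ha hat.getLast_mem, q ++ a :: t,
    hq.append hat hℓa, nodup_append_of_exit hSin hq hℓ hat ha hqn (List.nodup_append.1 hpn).2.1,
    List.mem_append_left _ hzq⟩

lemma isGeodetic_replace (hT : IsDitree D) (hSc : ∀ u ∈ S, ∀ v ∈ S, Reach D u v)
    (hSin : ∀ u v, v ∈ S → D u v → u ∈ S) (hS2 : 2 ≤ S.ncard) (hnoleaf : ∀ v ∈ S, ¬ IsLeaf D v)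
    (hM : IsGeodetic D M) (hx : x ∈ S) (hy : y ∈ S) : IsGeodetic D ((M \ {x}) ∪ {y}) := by
  have hN : ∀ v ∈ M, v ∉ S → v ∈ (M \ {x}) ∪ {y} := fun v hv hvS =>
    Or.inl ⟨hv, fun hvx => hvS ((Set.mem_singleton_iff.1 hvx) ▸ hx)⟩
  have hyN : y ∈ (M \ {x}) ∪ {y} := Or.inr rfl
  intro z
  by_cases hzS : z ∈ S
  · obtain ⟨v, hv, hvS, p, hp, hpn, hzp⟩ :=
      exists_isWalk_through_of_mem hT hSc hSin hS2 hnoleaf hM hy hzS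
    exact ⟨y, hyN, v, hN v hv hvS, hT.mem_interval_iff.2 ⟨p, hp, hpn, hzp⟩⟩
  obtain ⟨u, hu, v, hv, hz⟩ := hM z
  obtain ⟨p, hp, hpn, hzp⟩ := hT.mem_interval_iff.1 hz
  have hvS : v ∉ S := fun hvS => hzS (hp.mem_of_getLast_mem hSin hvS hzp)
  by_cases huS : u ∈ S
  · obtain ⟨g, hg, a, ha, hga, q, hq, hqp, hzq⟩ := hp.exists_exit huS hzp hzS
    obtain ⟨r, hr, hrn⟩ := exists_nodup_isWalk_of_reach (hSc y hy g hg)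
    exact ⟨y, hyN, v, hN v hv hvS, hT.mem_interval_iff.2 ⟨r ++ q, hr.append hq hga,
      nodup_append_of_exit hSin hr hg hq ha hrn (hpn.sublist hqp.sublist),
      List.mem_append_right _ hzq⟩⟩
  · exact ⟨u, hN u hu huS, v, hN v hv hvS, hz⟩

lemma _root_.Set.ncard_sdiff_singleton_union_singleton_le {α : Type*} {s : Set α} {a b : α}
    (ha : a ∈ s) (hb : b ∈ s → b = a) : (s \ {a} ∪ {b}).ncard ≤ s.ncard := by
  rw [Set.union_singleton]
  by_cases hbs : b ∈ s
  · obtain rfl := hb hbs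
    rw [Set.insert_sdiff_singleton, Set.insert_eq_of_mem ha]
  · exact (Set.ncard_exchange hbs ha).le

lemma IsMinGeodetic.of_isGeodetic_of_ncard_le {N : Set V} (hM : IsMinGeodetic D M)
    (hN : IsGeodetic D N) (hle : N.ncard ≤ M.ncard) : IsMinGeodetic D N :=
  ⟨hN, fun T hT => hle.trans (hM.2 T hT)⟩

lemma isMinGeodetic_replace (hT : IsDitree D) (hSc : ∀ u ∈ S, ∀ v ∈ S, Reach D u v)
    (hSin : ∀ u v, v ∈ S → D u v → u ∈ S) (hS2 : 2 ≤ S.ncard) (hnoleaf : ∀ v ∈ S, ¬ IsLeaf D v)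
    (hM : IsMinGeodetic D M) (hx : M ∩ S = {x}) (hy : y ∈ S) :
    IsMinGeodetic D ((M \ {x}) ∪ {y}) := by
  have hxMS : x ∈ M ∩ S := hx ▸ rfl
  refine hM.of_isGeodetic_of_ncard_le (isGeodetic_replace hT hSc hSin hS2 hnoleaf hM.1 hxMS.2 hy)
    (Set.ncard_sdiff_singleton_union_singleton_le hxMS.1 fun hyM => ?_)
  have hyMS : y ∈ M ∩ S := ⟨hyM, hy⟩
  rwa [hx] at hyMS

end Replace

section Swap

variable {D : V → V → Prop} {u v : V} {p : List V} {M : Set V}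

lemma isWalk_swap : IsWalk (Function.swap D) u v p ↔ IsWalk D v u p.reverse := by
  simp only [isWalk_iff, List.isChain_reverse, List.head?_reverse, List.getLast?_reverse]
  exact ⟨fun ⟨h₁, h₂, h₃⟩ => ⟨h₁, h₃, h₂⟩, fun ⟨h₁, h₂, h₃⟩ => ⟨h₁, h₃, h₂⟩⟩

lemma isGeodesic_swap : IsGeodesic (Function.swap D) u v p ↔ IsGeodesic D v u p.reverse := by
  simp only [IsGeodesic, isWalk_swap, List.length_reverse]
  refine and_congr_right fun _ => ⟨fun h q hq => ?_, fun h q hq => by simpa using h _ hq⟩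
  simpa using h q.reverse (by simpa using hq)

lemma interval_swap : interval (Function.swap D) u v = interval D v u := by
  ext z
  simp only [mem_interval_iff_exists_isGeodesic, isGeodesic_swap]
  exact ⟨fun ⟨p, hp, hz⟩ => ⟨p.reverse, hp, by simpa using hz⟩,
    fun ⟨p, hp, hz⟩ => ⟨p.reverse, by simpa using hp, by simpa using hz⟩⟩

lemma isGeodetic_swap : IsGeodetic (Function.swap D) M ↔ IsGeodetic D M := by
  simp only [IsGeodetic, interval_swap]
  exact forall_congr' fun _ => ⟨fun ⟨u, hu, v, hv, h⟩ => ⟨v, hv, u, hu, h⟩,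
    fun ⟨u, hu, v, hv, h⟩ => ⟨v, hv, u, hu, h⟩⟩

lemma isMinGeodetic_swap : IsMinGeodetic (Function.swap D) M ↔ IsMinGeodetic D M := by
  simp only [IsMinGeodetic, isGeodetic_swap]

lemma underlying_swap : underlying (Function.swap D) = underlying D := by
  ext u v
  simp only [underlying, Function.swap, or_comm]

lemma isDitree_swap : IsDitree (Function.swap D) ↔ IsDitree D := by
  unfold IsDitree
  rw [underlying_swap]

lemma isLeaf_swap : IsLeaf (Function.swap D) v ↔ IsLeaf D v := by
  unfold IsLeaf
  rw [underlying_swap]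

end Swap

theorem replace_in_sourceSet_isMinGeodetic_general (T : V → V → Prop)
    (hT : IsDitree T) (S : Set V) (hS : IsSourceSet T S ∨ IsSinkSet T S)
    (hS2 : 2 ≤ S.ncard) (hnoleaf : ∀ v ∈ S, ¬ IsLeaf T v)
    (M : Set V) (hM : IsMinGeodetic T M)
    (x : V) (hx : M ∩ S = {x})
    (y : V) (hy : y ∈ S) :
    IsMinGeodetic T ((M \ {x}) ∪ {y}) := by
  rcases hS with ⟨⟨-, hSc, -⟩, hSin⟩ | ⟨⟨-, hSc, -⟩, hSout⟩
  · exact isMinGeodetic_replace hT hSc hSin hS2 hnoleaf hM hx hy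
  · rw [← isMinGeodetic_swap] at hM ⊢
    exact isMinGeodetic_replace (isDitree_swap.2 hT)
      (fun u hu v hv => Relation.reflTransGen_swap.2 (hSc v hv u hu))
      (fun u v hv h => hSout v u hv h) hS2 (fun v hv => isLeaf_swap.not.2 (hnoleaf v hv)) hM hx hy

/-- Let `T` be a ditree and `S` a source set or a sink set of
`T` of size at least 2 containing no leaf. If `M` is a minimum geodetic set of
`T` containing exactly one vertex `x` of `S`, then the set obtained from `M`
by replacing `x` by any other vertex `y` of `S` is also a minimum geodetic set
of `T`. -/
theorem replace_in_sourceSet_isMinGeodetic [Fintype V] (T : V → V → Prop)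
    (hT : IsDitree T) (S : Set V) (hS : IsSourceSet T S ∨ IsSinkSet T S)
    (hS2 : 2 ≤ S.ncard) (hnoleaf : ∀ v ∈ S, ¬ IsLeaf T v)
    (M : Set V) (hM : IsMinGeodetic T M)
    (x : V) (hx : M ∩ S = {x})
    (y : V) (hy : y ∈ S) (hyx : y ≠ x) :
    IsMinGeodetic T ((M \ {x}) ∪ {y}) :=
  replace_in_sourceSet_isMinGeodetic_general T hT S hS hS2 hnoleaf M hM x hx y hy

end GeoPaper
end

section
/- Let T be a ditree, let S_1, …, S_t be all source sets and sink sets of T that contain no leaf, and let L be the set of all leaves of T. Let M be the subset of V(T) consisting of L together with exactly one (arbitrarily chosen) vertex from each S_i, 1 ≤ i ≤ t. Then M is a minimum geodetic set of T. -/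
namespace GeoPaper

variable {V : Type*}

/-!
In a ditree the only candidate for a shortest directed `u`–`v` walk is the tree path, so
`x ∈ I(u, v)` exactly when `u` reaches `v` and `x` lies on the tree path from `u` to `v`.

Every vertex reaches a sink set and is reached from a source set, and each of these contains a
vertex of `M` (a leaf, or the chosen vertex). So a vertex `x ∉ M`, which is not a leaf, satisfies
`m' ⇝ x ⇝ m` with `m, m' ∈ M`; this covers `x` unless `m` and `m'` lie in the same branch at `x`.
Then some other branch at `x` contains a vertex of `M` comparable with `x`: follow the strong
component of `x` into that branch as far as possible. It either ends in a leaf, or the next vertex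
`w` is reached from `x` but does not reach `x` (or the reverse), and anything `w` reaches (or that
reaches `w`) stays in the branch of `w`.

Conversely, a geodetic set contains every leaf, since a leaf is only ever an end of a tree path, and
meets every source set and sink set. The sets `{ℓ}` for leaves `ℓ` and the leafless extremal strong
components are pairwise disjoint, which gives an injection of `M` into any geodetic set.
-/

open SimpleGraph

theorem eq_or_eq_of_mem_support_of_ncard_neighborSet_eq_one {G : SimpleGraph V} {u v l : V}
    {p : G.Walk u v} (hp : p.IsPath) (hl : (G.neighborSet l).ncard = 1) (hlp : l ∈ p.support) :
    l = u ∨ l = v := by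
  induction p with
  | nil => exact .inl (by simpa using hlp)
  | @cons a b _ hab p ih =>
    obtain rfl | hlp := by simpa using hlp
    · exact .inl rfl
    obtain rfl | rfl := ih hp.of_cons hlp
    · cases p with
      | nil => exact .inr rfl
      | @cons _ d _ hld q =>
        have had : a = d := by
          obtain ⟨n, hn⟩ := Set.ncard_eq_one.1 hl
          have ha : a ∈ G.neighborSet l := hab.symm
          have hd : d ∈ G.neighborSet l := hld
          rw [hn] at ha hd
          exact ha.trans hd.symm
        subst had
        exact (((Walk.cons_isPath_iff _ _).1 hp).2 (by simp)).elim
    · exact .inr rfl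

theorem exists_adj_ne_of_ncard_neighborSet_ne_one {G : SimpleGraph V} [Finite V] {x b : V}
    (hx : (G.neighborSet x).ncard ≠ 1) (hb : G.Adj x b) : ∃ y, G.Adj x y ∧ y ≠ b := by
  have hpos : 0 < (G.neighborSet x).ncard := (Set.ncard_pos (Set.toFinite _)).2 ⟨b, hb⟩
  exact Set.exists_ne_of_one_lt_ncard (lt_of_le_of_ne hpos hx.symm) b

theorem ncard_le_ncard_of_forall_exists_mem {α β : Type*} {s : Set α} {t : Set β}
    (ht : t.Finite) (A : α → Set β) (hA : ∀ a ∈ s, ∃ b ∈ t, b ∈ A a)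
    (hdisj : ∀ a₁ ∈ s, ∀ a₂ ∈ s, ∀ b ∈ A a₁, b ∈ A a₂ → a₁ = a₂) : s.ncard ≤ t.ncard := by
  choose f hft hfA using hA
  have := ht.to_subtype
  rw [← Nat.card_coe_set_eq, ← Nat.card_coe_set_eq]
  refine Nat.card_le_card_of_injective (fun a : s => ⟨f a a.2, hft a a.2⟩) fun a₁ a₂ he => ?_
  have hf : f a₁ a₁.2 = f a₂ a₂.2 := congrArg Subtype.val he
  exact Subtype.ext (hdisj a₁ a₁.2 a₂ a₂.2 _ (hfA a₁ a₁.2) (hf ▸ hfA a₂ a₂.2))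

section StrongComponents

variable {T : V → V → Prop}

def sccOf (T : V → V → Prop) (x : V) : Set V := {y | Reach T x y ∧ Reach T y x}

theorem isSCC_sccOf (x : V) : IsSCC T (sccOf T x) :=
  ⟨⟨x, .refl, .refl⟩, fun _ hu _ hv => hu.2.trans hv.1,
    fun _ hS hSc y hy => ⟨hSc x (hS ⟨.refl, .refl⟩) y hy, hSc y hy x (hS ⟨.refl, .refl⟩)⟩⟩

theorem IsSCC.eq_sccOf {S : Set V} (hS : IsSCC T S) {x : V} (hx : x ∈ S) : S = sccOf T x := by
  have hsub : S ⊆ sccOf T x := fun y hy => ⟨hS.2.1 x hx y hy, hS.2.1 y hy x hx⟩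
  exact hsub.antisymm (hS.2.2 _ hsub (isSCC_sccOf x).2.1)

theorem IsSourceSet.mem_of_reach {S : Set V} (hS : IsSourceSet T S) {u c : V} (hc : c ∈ S)
    (h : Reach T u c) : u ∈ S := by
  induction h using Relation.ReflTransGen.head_induction_on with
  | refl => exact hc
  | head hab _ ih => exact hS.2 _ _ ih hab

theorem IsSinkSet.mem_of_reach {S : Set V} (hS : IsSinkSet T S) {c v : V} (hc : c ∈ S)
    (h : Reach T c v) : v ∈ S := by
  induction h with
  | refl => exact hc
  | tail _ hbc ih => exact hS.2 _ _ ih hbc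

theorem exists_isSinkSet_reach [Finite V] (z : V) : ∃ S, IsSinkSet T S ∧ ∃ c ∈ S, Reach T z c := by
  let later : V → V → Prop := fun a b => Reach T b a ∧ ¬ Reach T a b
  have : IsTrans V later :=
    ⟨fun _ _ _ hab hbc => ⟨hbc.1.trans hab.1, fun hac => hab.2 (hac.trans hbc.1)⟩⟩
  have : Std.Irrefl later := ⟨fun _ h => h.2 h.1⟩
  obtain ⟨w, hzw, hw⟩ := (Finite.wellFounded_of_trans_of_irrefl later).has_min {w | Reach T z w}
    ⟨z, .refl⟩
  refine ⟨sccOf T w, ⟨isSCC_sccOf w, fun u v hu huv => ?_⟩, w, ⟨.refl, .refl⟩, hzw⟩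
  have hwv : Reach T w v := hu.1.tail huv
  exact ⟨hwv, by_contra fun hvw => hw v (hzw.trans hwv) ⟨hwv, hvw⟩⟩

theorem reach_swap {a b : V} : Reach (Function.swap T) a b ↔ Reach T b a :=
  Relation.reflTransGen_swap

theorem isSCC_swap {S : Set V} : IsSCC (Function.swap T) S ↔ IsSCC T S := by
  have hconn : ∀ S' : Set V, (∀ u ∈ S', ∀ v ∈ S', Reach (Function.swap T) u v) ↔
      ∀ u ∈ S', ∀ v ∈ S', Reach T u v := fun S' => by
    simp only [reach_swap]
    exact ⟨fun h u hu v hv => h v hv u hu, fun h u hu v hv => h v hv u hu⟩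
  simp only [IsSCC, hconn]

theorem isSinkSet_swap {S : Set V} : IsSinkSet (Function.swap T) S ↔ IsSourceSet T S := by
  simp only [IsSinkSet, IsSourceSet, isSCC_swap]
  exact and_congr_right fun _ =>
    ⟨fun h u v hv huv => h v u hv huv, fun h u v hu huv => h v u hu huv⟩

theorem exists_isSourceSet_reach [Finite V] (z : V) :
    ∃ S, IsSourceSet T S ∧ ∃ c ∈ S, Reach T c z := by
  obtain ⟨S, hS, c, hc, hzc⟩ := exists_isSinkSet_reach (T := Function.swap T) z
  exact ⟨S, isSinkSet_swap.1 hS, c, hc, reach_swap.1 hzc⟩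

theorem xor_reach_of_adj_of_mem_sccOf {x z w : V} (hz : z ∈ sccOf T x)
    (hzw : (underlying T).Adj z w) (hw : w ∉ sccOf T x) : Xor (Reach T x w) (Reach T w x) := by
  rcases hzw.2 with hzw | hwz
  · have hxw : Reach T x w := hz.1.tail hzw
    exact .inl ⟨hxw, fun hwx => hw ⟨hxw, hwx⟩⟩
  · have hwx : Reach T w x := .head hwz hz.2
    exact .inr ⟨hwx, fun hxw => hw ⟨hxw, hwx⟩⟩

end StrongComponents

section ForwardWalks

variable {T : V → V → Prop}

theorem adj_of_arc (hirr : ∀ v, ¬ T v v) {a b : V} (h : T a b) : (underlying T).Adj a b :=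
  ⟨by rintro rfl; exact hirr _ h, .inl h⟩

def IsForward (T : V → V → Prop) {u v : V} (p : (underlying T).Walk u v) : Prop :=
  ∀ d ∈ p.darts, T d.fst d.snd

@[simp]
theorem isForward_nil {u : V} : IsForward T (Walk.nil : (underlying T).Walk u u) := by
  simp [IsForward]

@[simp]
theorem isForward_cons {u b v : V} (h : (underlying T).Adj u b) (p : (underlying T).Walk b v) :
    IsForward T (Walk.cons h p) ↔ T u b ∧ IsForward T p := by
  simp [IsForward]

theorem IsForward.reach_of_mem {u v x : V} {p : (underlying T).Walk u v} (hp : IsForward T p)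
    (hx : x ∈ p.support) : Reach T u x ∧ Reach T x v := by
  induction p generalizing x with
  | nil =>
    obtain rfl := by simpa using hx
    exact ⟨.refl, .refl⟩
  | cons h p ih =>
    rw [isForward_cons] at hp
    obtain rfl | hx := by simpa using hx
    · exact ⟨.refl, .head hp.1 (ih hp.2 p.start_mem_support).2⟩
    · exact ⟨.head hp.1 (ih hp.2 hx).1, (ih hp.2 hx).2⟩

theorem isWalk_iff_exists_isForward (hirr : ∀ v, ¬ T v v) {u v : V} {l : List V} :
    IsWalk T u v l ↔ ∃ p : (underlying T).Walk u v, IsForward T p ∧ p.support = l := by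
  constructor
  · rintro ⟨hc, hh, hl⟩
    induction l generalizing u with
    | nil => simp at hh
    | cons a l ih =>
      obtain rfl : a = u := by simpa using hh
      cases l with
      | nil =>
        obtain rfl : a = v := by simpa using hl
        exact ⟨.nil, isForward_nil, rfl⟩
      | cons b l =>
        obtain ⟨hab, hc⟩ := List.isChain_cons_cons.1 hc
        obtain ⟨p, hp, hpl⟩ := ih hc rfl (by simpa [List.getLast?_cons_cons] using hl)
        refine ⟨.cons (adj_of_arc hirr hab) p, by simp [hab, hp], by simp [hpl]⟩
  · rintro ⟨p, hp, rfl⟩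
    refine ⟨show List.IsChain T p.support from ?_, by cases p <;> simp, ?_⟩
    · induction p with
      | nil => exact List.isChain_singleton _
      | cons h p ih =>
        rw [isForward_cons] at hp
        rw [Walk.support_cons, List.isChain_cons]
        exact ⟨by cases p <;> simp [hp.1], ih hp.2⟩
    · rw [List.getLast?_eq_some_getLast (by simp), Walk.getLast_support]

end ForwardWalks

section TreePaths

variable {T : V → V → Prop}

noncomputable def treePath (hT : IsDitree T) (u v : V) : (underlying T).Walk u v :=
  (hT.2.existsUnique_path u v).exists.choose

theorem isPath_treePath (hT : IsDitree T) (u v : V) : (treePath hT u v).IsPath :=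
  (hT.2.existsUnique_path u v).exists.choose_spec

theorem eq_treePath (hT : IsDitree T) {u v : V} {p : (underlying T).Walk u v} (hp : p.IsPath) :
    p = treePath hT u v :=
  (hT.2.existsUnique_path u v).unique hp (isPath_treePath hT u v)

theorem length_treePath (hT : IsDitree T) (u v : V) :
    (treePath hT u v).length = (underlying T).dist u v := by
  obtain ⟨p, hp, hlen⟩ := (hT.2.connected.preconnected u v).exists_path_of_dist
  rw [← eq_treePath hT hp, hlen]

theorem treePath_self (hT : IsDitree T) (u : V) : treePath hT u u = .nil :=
  (eq_treePath hT .nil).symm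

theorem treePath_of_adj (hT : IsDitree T) {u v : V} (h : (underlying T).Adj u v) :
    treePath hT u v = .cons h .nil :=
  (eq_treePath hT (by simp [h.ne])).symm

theorem mem_support_treePath_comm (hT : IsDitree T) {u v x : V} :
    x ∈ (treePath hT u v).support ↔ x ∈ (treePath hT v u).support := by
  rw [← eq_treePath hT (isPath_treePath hT u v).reverse, Walk.support_reverse, List.mem_reverse]

theorem isForward_treePath (hT : IsDitree T) {u v : V} (h : Reach T u v) :
    IsForward T (treePath hT u v) := by
  classical
  induction h using Relation.ReflTransGen.head_induction_on with
  | refl => simp [treePath_self]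
  | @head a b hab _ ih =>
    by_cases ha : a ∈ (treePath hT b v).support
    · rw [← eq_treePath hT ((isPath_treePath hT _ _).dropUntil ha)]
      exact fun d hd => ih d (Walk.darts_dropUntil_subset_darts _ ha hd)
    · rw [← eq_treePath hT ((isPath_treePath hT _ _).cons ha (h := adj_of_arc hT.1 hab))]
      exact (isForward_cons _ _).2 ⟨hab, ih⟩

theorem mem_interval_iff (hT : IsDitree T) {u v x : V} :
    x ∈ interval T u v ↔ Reach T u v ∧ x ∈ (treePath hT u v).support := by
  have hdist : ∀ {p : (underlying T).Walk u v}, (underlying T).dist u v ≤ p.length :=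
    fun {p} => SimpleGraph.dist_le p
  constructor
  · rintro ⟨l, hl, hmin, hx⟩
    obtain ⟨p, hp, rfl⟩ := (isWalk_iff_exists_isForward hT.1).1 hl
    have huv : Reach T u v := (hp.reach_of_mem p.end_mem_support).1
    have hle := hmin _ ((isWalk_iff_exists_isForward hT.1).2 ⟨_, isForward_treePath hT huv, rfl⟩)
    rw [Walk.length_support, Walk.length_support, length_treePath] at hle
    rw [← eq_treePath hT (p.isPath_of_length_eq_dist (le_antisymm (by omega) hdist))]
    exact ⟨huv, hx⟩
  · rintro ⟨huv, hx⟩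
    refine ⟨_, (isWalk_iff_exists_isForward hT.1).2 ⟨_, isForward_treePath hT huv, rfl⟩,
      fun l hl => ?_, hx⟩
    obtain ⟨p, -, rfl⟩ := (isWalk_iff_exists_isForward hT.1).1 hl
    rw [Walk.length_support, Walk.length_support, length_treePath]
    exact Nat.succ_le_succ hdist

noncomputable def towards (hT : IsDitree T) (x u : V) : V := (treePath hT x u).snd

theorem towards_self (hT : IsDitree T) (x : V) : towards hT x x = x := by
  simp [towards, treePath_self]

theorem towards_of_adj (hT : IsDitree T) {x y : V} (h : (underlying T).Adj x y) :
    towards hT x y = y := by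
  simp [towards, treePath_of_adj hT h]

theorem adj_towards (hT : IsDitree T) {x u : V} (hu : u ≠ x) :
    (underlying T).Adj x (towards hT x u) :=
  Walk.adj_snd (Walk.not_nil_of_ne hu.symm)

theorem towards_eq_of_mem_support (hT : IsDitree T) {x u t : V}
    (ht : t ∈ (treePath hT x u).support) (htx : t ≠ x) : towards hT x t = towards hT x u := by
  classical
  unfold towards
  rw [← eq_treePath hT ((isPath_treePath hT x u).takeUntil ht), Walk.snd_takeUntil htx]

theorem towards_eq_of_adj (hT : IsDitree T) {x a c : V} (h : (underlying T).Adj a c)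
    (ha : a ≠ x) (hc : c ≠ x) : towards hT x a = towards hT x c := by
  by_cases hca : c ∈ (treePath hT x a).support
  · exact (towards_eq_of_mem_support hT hca hc).symm
  · have hpath := eq_treePath hT ((isPath_treePath hT x a).concat hca h)
    exact towards_eq_of_mem_support hT (hpath ▸ by simp) ha

theorem towards_eq_of_not_mem_support (hT : IsDitree T) {x a c : V}
    (p : (underlying T).Walk a c) (hx : x ∉ p.support) : towards hT x a = towards hT x c := by
  induction p with
  | nil => rfl
  | cons h p ih =>
    rw [Walk.support_cons, List.mem_cons, not_or] at hx
    exact (towards_eq_of_adj hT h (Ne.symm hx.1)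
      fun he => hx.2 (he ▸ p.start_mem_support)).trans (ih hx.2)

theorem mem_interval_of_towards_ne (hT : IsDitree T) {u v x : V} (hux : Reach T u x)
    (hxv : Reach T x v) (h : towards hT x u ≠ towards hT x v) : x ∈ interval T u v :=
  (mem_interval_iff hT).2
    ⟨hux.trans hxv, by_contra fun hx => h (towards_eq_of_not_mem_support hT _ hx)⟩

theorem towards_eq_of_reach_of_not_reach (hT : IsDitree T) {x w m : V} (hwm : Reach T w m)
    (hwx : ¬ Reach T w x) : towards hT x m = towards hT x w :=
  (towards_eq_of_not_mem_support hT (treePath hT w m)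
    fun hx => hwx ((isForward_treePath hT hwm).reach_of_mem hx).1).symm

theorem towards_eq_of_reach_of_not_reach' (hT : IsDitree T) {x w m : V} (hmw : Reach T m w)
    (hxw : ¬ Reach T x w) : towards hT x m = towards hT x w :=
  towards_eq_of_not_mem_support hT (treePath hT m w)
    fun hx => hxw ((isForward_treePath hT hmw).reach_of_mem hx).2

theorem dist_lt_of_adj_of_ne_towards (hT : IsDitree T) {x z w : V}
    (hzw : (underlying T).Adj z w) (hw : w ≠ towards hT z x) :
    (underlying T).dist x z < (underlying T).dist x w := by
  by_cases hwp : w ∈ (treePath hT x z).support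
  · refine absurd ?_ hw
    rw [← towards_eq_of_mem_support hT ((mem_support_treePath_comm hT).1 hwp) hzw.ne',
      towards_of_adj hT hzw]
  · rw [← length_treePath hT, ← length_treePath hT,
      ← eq_treePath hT ((isPath_treePath hT x z).concat hwp hzw), Walk.length_concat]
    omega


theorem exists_leaf_or_exit_in_branch [Finite V] (hT : IsDitree T) {x y : V}
    (hxy : (underlying T).Adj x y) :
    (∃ l, IsLeaf T l ∧ towards hT x l = y ∧ l ∈ sccOf T x) ∨
      ∃ w, towards hT x w = y ∧ Xor (Reach T x w) (Reach T w x) := by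
  set Z : Set V := {z | towards hT x z = y ∧ z ∈ sccOf T x}
  by_cases hZ : Z.Nonempty
  · obtain ⟨z, ⟨hzy, hz⟩, hmax⟩ :=
      Set.exists_max_image Z ((underlying T).dist x) (Set.toFinite Z) hZ
    by_cases hzl : IsLeaf T z
    · exact .inl ⟨z, hzl, hzy, hz⟩
    have hzx : z ≠ x := by
      rintro rfl
      exact hxy.ne ((towards_self hT z).symm.trans hzy)
    obtain ⟨w, hzw, hw⟩ :=
      exists_adj_ne_of_ncard_neighborSet_ne_one hzl (adj_towards hT (Ne.symm hzx))
    have hlt := dist_lt_of_adj_of_ne_towards hT hzw hw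
    have hwx : w ≠ x := by
      rintro rfl
      simp at hlt
    have hwy : towards hT x w = y := (towards_eq_of_adj hT hzw hzx hwx) ▸ hzy
    exact .inr ⟨w, hwy, xor_reach_of_adj_of_mem_sccOf hz hzw
      fun hw' => (hmax w ⟨hwy, hw'⟩).not_gt hlt⟩
  · have hyy := towards_of_adj hT hxy
    exact .inr ⟨y, hyy, xor_reach_of_adj_of_mem_sccOf ⟨.refl, .refl⟩ hxy
      fun hy => hZ ⟨y, hyy, hy⟩⟩
end TreePaths

section GeodeticSets

variable {T : V → V → Prop} {M : Set V}

theorem exists_mem_comparable_in_branch [Finite V] (hT : IsDitree T)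
    (hleaves : ∀ v, IsLeaf T v → v ∈ M) (hout : ∀ z, ∃ m ∈ M, Reach T z m)
    (hin : ∀ z, ∃ m ∈ M, Reach T m z) {x y : V} (hxy : (underlying T).Adj x y) :
    ∃ m ∈ M, towards hT x m = y ∧ (Reach T x m ∨ Reach T m x) := by
  rcases exists_leaf_or_exit_in_branch hT hxy with
    ⟨l, hl, hly, hlx⟩ | ⟨w, hwy, ⟨hxw, hwx⟩ | ⟨hwx, hxw⟩⟩
  · exact ⟨l, hleaves l hl, hly, .inl hlx.1⟩
  · obtain ⟨m, hm, hwm⟩ := hout w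
    exact ⟨m, hm, (towards_eq_of_reach_of_not_reach hT hwm hwx).trans hwy, .inl (hxw.trans hwm)⟩
  · obtain ⟨m, hm, hmw⟩ := hin w
    exact ⟨m, hm, (towards_eq_of_reach_of_not_reach' hT hmw hxw).trans hwy, .inr (hmw.trans hwx)⟩

theorem isGeodetic_of_forall_reach [Finite V] (hT : IsDitree T)
    (hleaves : ∀ v, IsLeaf T v → v ∈ M) (hout : ∀ z, ∃ m ∈ M, Reach T z m)
    (hin : ∀ z, ∃ m ∈ M, Reach T m z) : IsGeodetic T M := by
  intro x
  by_cases hxM : x ∈ M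
  · exact ⟨x, hxM, x, hxM, (mem_interval_iff hT).2 ⟨.refl, Walk.start_mem_support _⟩⟩
  obtain ⟨m, hmM, hxm⟩ := hout x
  obtain ⟨m', hm'M, hm'x⟩ := hin x
  by_cases hbr : towards hT x m' = towards hT x m
  swap
  · exact ⟨m', hm'M, m, hmM, mem_interval_of_towards_ne hT hm'x hxm hbr⟩
  obtain ⟨y, hxy, hyb⟩ := exists_adj_ne_of_ncard_neighborSet_ne_one
    (fun hx => hxM (hleaves x hx)) (adj_towards hT (ne_of_mem_of_not_mem hmM hxM))
  obtain ⟨m'', hm''M, hy, hxm'' | hm''x⟩ := exists_mem_comparable_in_branch hT hleaves hout hin hxy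
  · exact ⟨m', hm'M, m'', hm''M,
      mem_interval_of_towards_ne hT hm'x hxm'' (by rw [hbr, hy]; exact hyb.symm)⟩
  · exact ⟨m'', hm''M, m, hmM, mem_interval_of_towards_ne hT hm''x hxm (by rw [hy]; exact hyb)⟩

theorem IsGeodetic.leaf_mem (hT : IsDitree T) {S : Set V} (hS : IsGeodetic T S) {l : V}
    (hl : IsLeaf T l) : l ∈ S := by
  obtain ⟨u, hu, v, hv, hluv⟩ := hS l
  rcases eq_or_eq_of_mem_support_of_ncard_neighborSet_eq_one (isPath_treePath hT u v) hl
    ((mem_interval_iff hT).1 hluv).2 with rfl | rfl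
  exacts [hu, hv]

theorem IsGeodetic.exists_mem_of_isSourceSet_or_isSinkSet (hT : IsDitree T) {S C : Set V}
    (hS : IsGeodetic T S) (hC : IsSourceSet T C ∨ IsSinkSet T C) : ∃ s ∈ S, s ∈ C := by
  obtain ⟨c, hc⟩ := (hC.elim (·.1) (·.1)).1
  obtain ⟨u, hu, v, hv, hcuv⟩ := hS c
  obtain ⟨huv, hc'⟩ := (mem_interval_iff hT).1 hcuv
  obtain ⟨huc, hcv⟩ := (isForward_treePath hT huv).reach_of_mem hc'
  rcases hC with hC | hC
  exacts [⟨u, hu, hC.mem_of_reach hc huc⟩, ⟨v, hv, hC.mem_of_reach hc hcv⟩]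

theorem ncard_le_of_isGeodetic [Finite V] (hT : IsDitree T)
    (honly : ∀ v ∈ M, IsLeaf T v ∨ ∃ S : Set V,
      (IsSourceSet T S ∨ IsSinkSet T S) ∧ (∀ w ∈ S, ¬ IsLeaf T w) ∧ v ∈ S)
    (hone : ∀ S : Set V, (IsSourceSet T S ∨ IsSinkSet T S) →
      (∀ w ∈ S, ¬ IsLeaf T w) → ∃! v, v ∈ M ∩ S)
    {S : Set V} (hS : IsGeodetic T S) : M.ncard ≤ S.ncard := by
  classical
  have hscc : ∀ m ∈ M, ¬ IsLeaf T m → (IsSourceSet T (sccOf T m) ∨ IsSinkSet T (sccOf T m)) ∧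
      ∀ w ∈ sccOf T m, ¬ IsLeaf T w := by
    intro m hm hml
    obtain ⟨C, hC, hCl, hmC⟩ := (honly m hm).resolve_left hml
    rw [← (hC.elim (·.1) (·.1)).eq_sccOf hmC]
    exact ⟨hC, hCl⟩
  refine ncard_le_ncard_of_forall_exists_mem (Set.toFinite S)
    (fun m => if IsLeaf T m then {m} else sccOf T m) (fun m hm => ?_)
    (fun m₁ hm₁ m₂ hm₂ s hs₁ hs₂ => ?_)
  · split_ifs with hml
    · exact ⟨m, hS.leaf_mem hT hml, rfl⟩
    · exact hS.exists_mem_of_isSourceSet_or_isSinkSet hT (hscc m hm hml).1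
  · split_ifs at hs₁ hs₂ with hl₁ hl₂ hl₂
    · exact hs₁.symm.trans hs₂
    · exact ((hscc m₂ hm₂ hl₂).2 s hs₂ (hs₁ ▸ hl₁)).elim
    · exact ((hscc m₁ hm₁ hl₁).2 s hs₁ (hs₂ ▸ hl₂)).elim
    · obtain ⟨hC, hCl⟩ := hscc m₂ hm₂ hl₂
      exact (hone _ hC hCl).unique ⟨hm₁, hs₂.1.trans hs₁.2, hs₁.1.trans hs₂.2⟩ ⟨hm₂, .refl, .refl⟩

end GeodeticSets

/-- Let `T` be a ditree, let `S_1, …, S_t` be all source sets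
and sink sets of `T` containing no leaf, and let `L` be the set of leaves of
`T`. Any set `M` consisting of `L` together with exactly one vertex from each
`S_i` is a minimum geodetic set of `T`. -/
theorem leaves_plus_one_per_extremal_scc_isMinGeodetic [Fintype V]
    (T : V → V → Prop) (hT : IsDitree T) (M : Set V)
    (hleaves : ∀ v, IsLeaf T v → v ∈ M)
    (honly : ∀ v ∈ M, IsLeaf T v ∨ ∃ S : Set V,
      (IsSourceSet T S ∨ IsSinkSet T S) ∧ (∀ w ∈ S, ¬ IsLeaf T w) ∧ v ∈ S)
    (hone : ∀ S : Set V, (IsSourceSet T S ∨ IsSinkSet T S) →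
      (∀ w ∈ S, ¬ IsLeaf T w) → ∃! v, v ∈ M ∩ S) :
    IsMinGeodetic T M := by
  have hmeet : ∀ C, (IsSourceSet T C ∨ IsSinkSet T C) → ∃ m ∈ M, m ∈ C := by
    intro C hC
    by_cases hleaf : ∃ l ∈ C, IsLeaf T l
    · obtain ⟨l, hlC, hl⟩ := hleaf
      exact ⟨l, hleaves l hl, hlC⟩
    · obtain ⟨m, ⟨hm, hmC⟩, -⟩ := hone C hC fun w hw hwl => hleaf ⟨w, hw, hwl⟩
      exact ⟨m, hm, hmC⟩
  refine ⟨isGeodetic_of_forall_reach hT hleaves (fun z => ?_) (fun z => ?_),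
    fun S hS => ncard_le_of_isGeodetic hT honly hone hS⟩
  · obtain ⟨C, hC, c, hc, hzc⟩ := exists_isSinkSet_reach z
    obtain ⟨m, hm, hmC⟩ := hmeet C (.inr hC)
    exact ⟨m, hm, hzc.trans (hC.1.2.1 c hc m hmC)⟩
  · obtain ⟨C, hC, c, hc, hcz⟩ := exists_isSourceSet_reach z
    obtain ⟨m, hm, hmC⟩ := hmeet C (.inl hC)
    exact ⟨m, hm, (hC.1.2.1 m hmC c hc).trans hcz⟩

end GeoPaper
end

section
/- Let G be an undirected graph with feedback edge set number fen(G) ≥ 1. Then the base graph of G has at most 2·fen(G) − 2 core vertices and at most 3·fen(G) − 3 core paths. -/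
namespace GeoPaper

variable {V : Type*}

variable {V : Type*}

/-- degree of `v` inside the vertex subset `W` of the graph `G`. -/
noncomputable def degIn (G : SimpleGraph V) (W : Set V) (v : V) : ℕ := {u | u ∈ W ∧ G.Adj v u}.ncard

/-- one round of pruning: delete all vertices of degree exactly 1. -/
def pruneStep (G : SimpleGraph V) (W : Set V) : Set V := {v | v ∈ W ∧ degIn G W v ≠ 1}

/-- the vertex set of the base graph of `G`, obtained by iteratively deleting
degree-1 vertices until none remain. -/
def baseSet (G : SimpleGraph V) : Set V := ⋂ k, (pruneStep G)^[k] Set.univ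

/-- a core vertex: a vertex of degree at least 3 in the base graph. -/
def IsCoreVertex (G : SimpleGraph V) (v : V) : Prop :=
  v ∈ baseSet G ∧ 3 ≤ degIn G (baseSet G) v

/-- the inner vertices of a path represented as a list of its vertices. -/
def innerList (p : List V) : List V := (p.drop 1).dropLast

/-- a core path of the base graph of `G`: a path between two core vertices all
of whose internal vertices have degree 2 in the base graph (the two endpoints
may coincide, in which case the core path is a core cycle). -/
def IsCorePath (G : SimpleGraph V) (p : List V) : Prop :=
  ∃ a q b, p = a :: (q ++ [b]) ∧
    p.Chain' G.Adj ∧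
    (∀ v ∈ p, v ∈ baseSet G) ∧
    IsCoreVertex G a ∧ IsCoreVertex G b ∧
    q.Nodup ∧ (∀ v ∈ q, v ≠ a ∧ v ≠ b ∧ degIn G (baseSet G) v = 2) ∧
    (a = b → 4 ≤ p.length) ∧ (a ≠ b → p.Nodup)

/-- the feedback edge set number: the minimum number of edges whose deletion
yields a forest. -/
noncomputable def fen (G : SimpleGraph V) : ℕ :=
  sInf {k | ∃ F : Set (Sym2 V), F ⊆ G.edgeSet ∧ F.ncard = k ∧ (G.deleteEdges F).IsAcyclic}

/-- the feedback vertex set number: the minimum number of vertices whose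
deletion yields a forest. -/
noncomputable def fvn (G : SimpleGraph V) : ℕ :=
  sInf {k | ∃ W : Set V, W.ncard = k ∧ (G.induce Wᶜ).IsAcyclic}


/-!
Let `H` be the base graph and `F` a minimum feedback edge set, `k = |F|`. No vertex of `H` has
degree 1, and `H - F` is a forest on the `c + t` non-isolated vertices (`c` core vertices, `t` of
degree 2), so `H` has at most `c + t - 1 + k` edges, while by the handshake lemma it has
`(D + 2t) / 2` edges, where `D ≥ 3c` is the total degree of the core vertices. Hence
`c ≤ 2k - 2` and `D ≤ 6k - 6`. A core path is determined by its first dart, since at a vertex of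
degree 2 it can only go on one way, and a core path together with its reversal uses two darts
leaving core vertices; so there are at most `D / 2 ≤ 3k - 3` core paths up to reversal.
-/

theorem _root_.List.length_le_one_of_reverse_eq {α : Type*} {l : List α} (hl : l.Nodup)
    (hrev : l.reverse = l) : l.length ≤ 1 := by
  by_contra! hlen
  have h0 : 0 < l.length := by omega
  have hlast : l.length - 1 < l.length := by omega
  have h := congrArg (·[0]?) hrev
  simp only [List.getElem?_reverse h0, Nat.sub_zero, List.getElem?_eq_getElem hlast,
    List.getElem?_eq_getElem h0, Option.some.injEq] at h
  have := hl.getElem_inj_iff.mp h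
  omega

open Finset in
theorem _root_.Set.ncard_eq_two_mul_ncard_setOf_pair {α : Type*} {X : Set α} (hX : X.Finite)
    {σ : α → α} (hσX : ∀ x ∈ X, σ x ∈ X) (hσσ : ∀ x ∈ X, σ (σ x) = x)
    (hσ : ∀ x ∈ X, σ x ≠ x) :
    X.ncard = 2 * {t : Set α | ∃ x ∈ X, t = {x, σ x}}.ncard := by
  classical
  obtain ⟨s, rfl⟩ := hX.exists_finset_coe
  set pair : α → Set α := fun x => {x, σ x}
  have hfiber : ∀ x ∈ s, {y ∈ s | pair y = pair x} = {x, σ x} := by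
    intro x hx
    ext y
    simp only [Finset.mem_filter, Finset.mem_insert, Finset.mem_singleton]
    constructor
    · rintro ⟨-, hy⟩
      have : y ∈ pair x := hy ▸ Set.mem_insert y {σ y}
      simpa [pair] using this
    · rintro (rfl | rfl)
      · exact ⟨hx, rfl⟩
      · exact ⟨hσX x hx, by simp only [pair, hσσ x hx, Set.pair_comm]⟩
  have himage : {t : Set α | ∃ x ∈ (s : Set α), t = pair x} = ↑(s.image pair) := by
    ext t
    simp [eq_comm]
  rw [himage, Set.ncard_coe_finset, Set.ncard_coe_finset, card_eq_sum_card_image pair s,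
    mul_comm, ← smul_eq_mul, ← sum_const]
  refine sum_congr rfl fun t ht => ?_
  obtain ⟨x, hx, rfl⟩ := Finset.mem_image.mp ht
  rw [hfiber x hx, card_pair (hσ x hx).symm]

section Graphs

open Finset SimpleGraph

variable {G : SimpleGraph V} [Fintype V] [DecidableRel G.Adj]

theorem _root_.SimpleGraph.eq_of_adj_of_degree_eq_two {v w x y : V} (hv : G.degree v = 2)
    (hw : G.Adj v w) (hx : G.Adj v x) (hy : G.Adj v y) (hxw : x ≠ w) (hyw : y ≠ w) : x = y := by
  classical
  obtain ⟨c, d, -, hcd⟩ := card_eq_two.mp ((card_neighborFinset_eq_degree G v).trans hv)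
  have hmem : ∀ u, G.Adj v u → u = c ∨ u = d := fun u hu => by
    simpa [hcd] using (mem_neighborFinset G v u).mpr hu
  rcases hmem w hw with rfl | rfl <;> rcases hmem x hx with rfl | rfl <;>
    rcases hmem y hy with rfl | rfl <;> simp_all

theorem _root_.SimpleGraph.IsAcyclic.card_edgeFinset_add_one_le_card [Nonempty V]
    (hG : G.IsAcyclic) :
    #G.edgeFinset + 1 ≤ Fintype.card V := by
  obtain ⟨T, hGT, -, hT⟩ := connected_top.exists_isTree_le_of_le_of_isAcyclic le_top hG
  classical
  rw [← hT.card_edgeFinset]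
  exact Nat.add_le_add_right (card_le_card (edgeFinset_mono hGT)) 1

theorem _root_.SimpleGraph.IsAcyclic.card_edgeFinset_add_one_le_of_support_subset {s : Finset V}
    (hG : G.IsAcyclic) (hs : s.Nonempty) (hsupp : G.support ⊆ s) :
    #G.edgeFinset + 1 ≤ #s := by
  classical
  have : Nonempty (s : Set V) := hs.to_subtype
  have hcard : #G.edgeFinset = #(G.induce s).edgeFinset := by
    rw [← card_edgeFinset_map (Function.Embedding.subtype _)]
    congr 1
    ext e
    simp only [mem_edgeFinset]
    conv_lhs => rw [← (spanningCoe_induce_eq_self G s).mpr hsupp]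
  rw [hcard, ← Fintype.card_coe s]
  convert (hG.induce s).card_edgeFinset_add_one_le_card using 2
  rfl

theorem _root_.SimpleGraph.card_edgeFinset_add_one_le_of_isAcyclic_deleteEdges {F : Set (Sym2 V)}
    (hF : (G.deleteEdges F).IsAcyclic) (hk : 1 ≤ F.ncard) :
    #G.edgeFinset + 1 ≤ #{v | 0 < G.degree v} + F.ncard := by
  classical
  have hdel : #G.edgeFinset ≤ #(G.deleteEdges F).edgeFinset + F.ncard := by
    simp only [← Set.ncard_coe_finset, coe_edgeFinset, edgeSet_deleteEdges]
    calc G.edgeSet.ncard ≤ (G.edgeSet \ F ∪ F).ncard :=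
          Set.ncard_le_ncard (by simp) (Set.toFinite _)
      _ ≤ (G.edgeSet \ F).ncard + F.ncard := Set.ncard_union_le _ _
  rcases G.edgeFinset.eq_empty_or_nonempty with hE | ⟨e, he⟩
  · rw [hE, card_empty]; omega
  have hsupp : (G.deleteEdges F).support ⊆ ({v | 0 < G.degree v} : Finset V) := by
    rintro v ⟨w, hvw⟩
    simpa [degree_pos_iff_exists_adj] using ⟨w, (deleteEdges_le F hvw)⟩
  have hS : ({v | 0 < G.degree v} : Finset V).Nonempty := by
    induction e using Sym2.ind with
    | _ u w =>
      exact ⟨u, by simpa [degree_pos_iff_exists_adj] using ⟨w, mem_edgeFinset.mp he⟩⟩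
  have := hF.card_edgeFinset_add_one_le_of_support_subset hS hsupp
  omega

theorem _root_.SimpleGraph.two_mul_card_edgeFinset_eq_of_degree_ne_one
    (hdeg : ∀ v, G.degree v ≠ 1) :
    2 * #G.edgeFinset = ∑ v with 3 ≤ G.degree v, G.degree v + 2 * #{v | G.degree v = 2} := by
  rw [← sum_degrees_eq_twice_card_edges, sum_filter, card_filter, mul_sum, ← sum_add_distrib]
  refine sum_congr rfl fun v _ => ?_
  have := hdeg v
  split_ifs <;> omega

theorem _root_.SimpleGraph.card_degree_pos_eq_of_degree_ne_one (hdeg : ∀ v, G.degree v ≠ 1) :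
    #{v | 0 < G.degree v} = #{v | 3 ≤ G.degree v} + #{v | G.degree v = 2} := by
  simp only [card_filter, ← sum_add_distrib]
  refine sum_congr rfl fun v _ => ?_
  have := hdeg v
  split_ifs <;> omega

theorem _root_.SimpleGraph.card_le_and_sum_degree_le_of_isAcyclic_deleteEdges
    (hdeg : ∀ v, G.degree v ≠ 1) {F : Set (Sym2 V)} (hF : (G.deleteEdges F).IsAcyclic)
    (hk : 1 ≤ F.ncard) :
    #{v | 3 ≤ G.degree v} + 2 ≤ 2 * F.ncard ∧
      ∑ v with 3 ≤ G.degree v, G.degree v + 6 ≤ 6 * F.ncard := by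
  have hforest := card_edgeFinset_add_one_le_of_isAcyclic_deleteEdges hF hk
  have hhand := two_mul_card_edgeFinset_eq_of_degree_ne_one hdeg
  rw [card_degree_pos_eq_of_degree_ne_one hdeg] at hforest
  have hcore : 3 * #{v | 3 ≤ G.degree v} ≤ ∑ v with 3 ≤ G.degree v, G.degree v := by
    rw [mul_comm, ← smul_eq_mul]
    exact card_nsmul_le_sum _ _ _ fun v hv => (mem_filter.mp hv).2
  omega

end Graphs

section Pruning

variable (G : SimpleGraph V)

lemma pruneStep_subset (W : Set V) : pruneStep G W ⊆ W := fun _ hv => hv.1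

lemma antitone_iterate_pruneStep : Antitone fun k => (pruneStep G)^[k] Set.univ :=
  antitone_nat_of_succ_le fun k => by
    rw [Function.iterate_succ_apply']
    exact pruneStep_subset G _

lemma pruneStep_baseSet [Finite V] : pruneStep G (baseSet G) = baseSet G := by
  obtain ⟨n, hn⟩ := WellFoundedLT.antitone_chain_condition (antitone_iterate_pruneStep G)
  have hbase : baseSet G = (pruneStep G)^[n] Set.univ := by
    refine (Set.iInter_subset _ n).antisymm (Set.subset_iInter fun k => ?_)
    rcases le_total k n with hk | hk
    · exact antitone_iterate_pruneStep G hk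
    · exact (hn k hk).le
  rw [hbase, ← Function.iterate_succ_apply' (pruneStep G), ← hn _ n.le_succ]

lemma degIn_baseSet_ne_one [Finite V] {v : V} (hv : v ∈ baseSet G) :
    degIn G (baseSet G) v ≠ 1 :=
  ((pruneStep_baseSet G).symm ▸ hv : v ∈ pruneStep G (baseSet G)).2

end Pruning

def baseGraph (G : SimpleGraph V) : SimpleGraph V where
  Adj u v := u ∈ baseSet G ∧ v ∈ baseSet G ∧ G.Adj u v
  symm := ⟨fun _ _ h => ⟨h.2.1, h.1, h.2.2.symm⟩⟩
  loopless := ⟨fun v h => G.loopless.irrefl v h.2.2⟩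

lemma baseGraph_le (G : SimpleGraph V) : baseGraph G ≤ G := fun _ _ h => h.2.2

section BaseGraph

variable (G : SimpleGraph V) [Fintype V] [DecidableRel (baseGraph G).Adj]

lemma degree_baseGraph {v : V} (hv : v ∈ baseSet G) :
    (baseGraph G).degree v = degIn G (baseSet G) v := by
  rw [← SimpleGraph.card_neighborSet_eq_degree, ← Nat.card_eq_fintype_card,
    Nat.card_coe_set_eq]
  congr 1
  ext u
  exact ⟨fun h => ⟨h.2.1, h.2.2⟩, fun h => ⟨hv, h⟩⟩

lemma degree_baseGraph_of_notMem {v : V} (hv : v ∉ baseSet G) : (baseGraph G).degree v = 0 := by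
  rw [SimpleGraph.degree_eq_zero_iff_notMem_support]
  rintro ⟨u, huv⟩
  exact hv huv.1

lemma degree_baseGraph_ne_one (v : V) : (baseGraph G).degree v ≠ 1 := by
  by_cases hv : v ∈ baseSet G
  · rw [degree_baseGraph G hv]
    exact degIn_baseSet_ne_one G hv
  · simp [degree_baseGraph_of_notMem G hv]

lemma isCoreVertex_iff {v : V} : IsCoreVertex G v ↔ 3 ≤ (baseGraph G).degree v := by
  by_cases hv : v ∈ baseSet G
  · simp [IsCoreVertex, hv, degree_baseGraph G hv]
  · simp [IsCoreVertex, hv, degree_baseGraph_of_notMem G hv]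

end BaseGraph

/-- The nodup conditions rule out immediate returns `u, v, u` along the walk. -/
structure IsSuspendedWalk (H : SimpleGraph V) [Fintype V] [DecidableRel H.Adj]
    (w : V) (q : List V) (b : V) : Prop where
  isChain : (w :: (q ++ [b])).IsChain H.Adj
  degree_inner : ∀ v ∈ q, H.degree v = 2
  degree_last : H.degree b ≠ 2
  nodup_cons : (w :: q).Nodup
  nodup_append : (q ++ [b]).Nodup
  ne_of_length_eq_one : q.length = 1 → w ≠ b

namespace IsSuspendedWalk

variable {H : SimpleGraph V} [Fintype V] [DecidableRel H.Adj] {w y b : V} {r : List V}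

lemma tail (h : IsSuspendedWalk H w (y :: r) b) : IsSuspendedWalk H y r b where
  isChain := (List.isChain_cons_cons.mp h.isChain).2
  degree_inner v hv := h.degree_inner v (List.mem_cons_of_mem y hv)
  degree_last := h.degree_last
  nodup_cons := (List.nodup_append.mp h.nodup_append).1
  nodup_append := (List.nodup_cons.mp h.nodup_append).2
  ne_of_length_eq_one _ hyb := h.degree_last (hyb ▸ h.degree_inner y List.mem_cons_self)

lemma ne_of_append_eq_cons (h : IsSuspendedWalk H w (y :: r) b) {z : V} {t : List V}
    (hz : r ++ [b] = z :: t) : z ≠ w := by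
  cases r with
  | nil =>
    obtain ⟨rfl, -⟩ := List.cons_eq_cons.mp hz
    exact (h.ne_of_length_eq_one rfl).symm
  | cons c r =>
    obtain ⟨rfl, -⟩ := List.cons_eq_cons.mp hz
    rintro rfl
    exact (List.nodup_cons.mp h.nodup_cons).1 (by simp)

/-- Each inner vertex has degree 2, so after entering it the walk can only leave along its other
neighbour. -/
theorem append_eq {q q' : List V} {b' : V} (h : IsSuspendedWalk H w q b)
    (h' : IsSuspendedWalk H w q' b')
    (hhead : (q ++ [b]).head? = (q' ++ [b']).head?) : q ++ [b] = q' ++ [b'] := by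
  induction q generalizing w q' with
  | nil =>
    cases q' with
    | nil => simpa using hhead
    | cons y' r' =>
      obtain rfl : b = y' := by simpa using hhead
      exact absurd (h'.degree_inner b List.mem_cons_self) h.degree_last
  | cons y r ih =>
    cases q' with
    | nil =>
      obtain rfl : y = b' := by simpa using hhead
      exact absurd (h.degree_inner y List.mem_cons_self) h'.degree_last
    | cons y' r' =>
      obtain rfl : y = y' := by simpa using hhead
      obtain ⟨z, t, hz⟩ := List.exists_cons_of_ne_nil (List.append_ne_nil_of_right_ne_nil r
        (List.cons_ne_nil b []))
      obtain ⟨z', t', hz'⟩ := List.exists_cons_of_ne_nil (List.append_ne_nil_of_right_ne_nil r'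
        (List.cons_ne_nil b' []))
      have hchain := h.isChain
      have hchain' := h'.isChain
      simp only [List.cons_append, hz, List.isChain_cons_cons] at hchain
      simp only [List.cons_append, hz', List.isChain_cons_cons] at hchain'
      have hzz' : z = z' :=
        SimpleGraph.eq_of_adj_of_degree_eq_two (h.degree_inner y List.mem_cons_self)
          hchain.1.symm hchain.2.1 hchain'.2.1 (h.ne_of_append_eq_cons hz)
          (h'.ne_of_append_eq_cons hz')
      simp only [List.cons_append, ih h.tail h'.tail (by rw [hz, hz', hzz']; rfl)]

end IsSuspendedWalk

namespace IsCorePath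

variable {G : SimpleGraph V} {p p' : List V}

lemma reverse (hp : IsCorePath G p) : IsCorePath G p.reverse := by
  obtain ⟨a, q, b, rfl, hchain, hmem, ha, hb, hnd, hq, hcyc, hpath⟩ := hp
  refine ⟨b, q.reverse, a, by simp, List.isChain_reverse.mpr (hchain.imp fun _ _ h => h.symm),
    fun v hv => hmem v (List.mem_reverse.mp hv), hb, ha, List.nodup_reverse.mpr hnd,
    fun v hv => ?_, fun hba => ?_, fun hba => List.nodup_reverse.mpr (hpath (Ne.symm hba))⟩
  · obtain ⟨hva, hvb, hdeg⟩ := hq v (List.mem_reverse.mp hv)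
    exact ⟨hvb, hva, hdeg⟩
  · simpa using hcyc hba.symm

lemma reverse_ne (hp : IsCorePath G p) : p.reverse ≠ p := by
  obtain ⟨a, q, b, rfl, -, -, -, -, hnd, -, hcyc, -⟩ := hp
  intro hrev
  simp only [List.reverse_cons, List.reverse_append, List.reverse_nil, List.nil_append,
    List.cons_append, List.cons.injEq, List.append_singleton_inj] at hrev
  obtain ⟨-, hq_rev, rfl⟩ := hrev
  have := hcyc rfl
  simp only [List.length_cons, List.length_append, List.length_nil] at this
  have := List.length_le_one_of_reverse_eq hnd hq_rev
  omega

variable [Fintype V]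

lemma exists_isSuspendedWalk [DecidableRel (baseGraph G).Adj] (hp : IsCorePath G p) :
    ∃ a q b, p = a :: (q ++ [b]) ∧ 3 ≤ (baseGraph G).degree a ∧
      IsSuspendedWalk (baseGraph G) a q b := by
  obtain ⟨a, q, b, rfl, hchain, hmem, ha, hb, hnd, hq, hcyc, -⟩ := hp
  refine ⟨a, q, b, rfl, (isCoreVertex_iff G).mp ha, ?_⟩
  refine ⟨hchain.imp_of_mem_imp fun u v hu hv huv => ⟨hmem u hu, hmem v hv, huv⟩,
    fun v hv => ?_, ?_, List.nodup_cons.mpr ⟨fun haq => (hq a haq).1 rfl, hnd⟩,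
    List.nodup_append.mpr ⟨hnd, List.nodup_singleton b, ?_⟩, fun hlen hab => ?_⟩
  · rw [degree_baseGraph G (hmem v (by simp [hv]))]
    exact (hq v hv).2.2
  · have := (isCoreVertex_iff G).mp hb
    omega
  · intro v hv w hw
    rw [List.mem_singleton.mp hw]
    exact (hq v hv).2.1
  · have := hcyc hab
    simp only [List.length_cons, List.length_append, List.length_nil] at this
    omega

lemma take_two [DecidableRel (baseGraph G).Adj] (hp : IsCorePath G p) :
    ∃ a x, p.take 2 = [a, x] ∧ 3 ≤ (baseGraph G).degree a ∧ (baseGraph G).Adj a x := by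
  obtain ⟨a, q, b, rfl, ha, hwalk⟩ := hp.exists_isSuspendedWalk
  obtain ⟨x, t, hx⟩ := List.exists_cons_of_ne_nil (List.append_ne_nil_of_right_ne_nil q
    (List.cons_ne_nil b []))
  have hchain := hwalk.isChain
  rw [hx, List.isChain_cons_cons] at hchain
  exact ⟨a, x, by simp [hx], ha, hchain.1⟩

lemma eq_of_take_two_eq (hp : IsCorePath G p) (hp' : IsCorePath G p')
    (h : p.take 2 = p'.take 2) : p = p' := by
  classical
  obtain ⟨a, q, b, rfl, -, hwalk⟩ := hp.exists_isSuspendedWalk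
  obtain ⟨a', q', b', rfl, -, hwalk'⟩ := hp'.exists_isSuspendedWalk
  obtain ⟨rfl, htake⟩ := List.cons_eq_cons.mp h
  rw [hwalk.append_eq hwalk' ?_]
  simpa [List.head?_take] using congrArg List.head? htake

end IsCorePath

section Counting

open Finset

variable (G : SimpleGraph V) [Fintype V]

lemma ncard_setOf_isCoreVertex [DecidableRel (baseGraph G).Adj] :
    {v | IsCoreVertex G v}.ncard = #{v | 3 ≤ (baseGraph G).degree v} := by
  rw [← Set.ncard_coe_finset]
  simp only [coe_filter, mem_univ, true_and, isCoreVertex_iff]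

lemma mapsTo_take_two_setOf_isCorePath [DecidableRel (baseGraph G).Adj] :
    Set.MapsTo (List.take 2) {p | IsCorePath G p}
      ((fun x : (_ : V) × V => [x.1, x.2]) ''
        ↑(({v | 3 ≤ (baseGraph G).degree v} : Finset V).sigma
          ((baseGraph G).neighborFinset ·))) := by
  intro p hp
  obtain ⟨a, x, htake, ha, hax⟩ := IsCorePath.take_two hp
  rw [htake]
  exact ⟨⟨a, x⟩, by simpa using ⟨ha, hax⟩, rfl⟩

lemma injOn_take_two_setOf_isCorePath : Set.InjOn (List.take 2) {p | IsCorePath G p} :=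
  fun _ hp _ hp' h => IsCorePath.eq_of_take_two_eq hp hp' h

lemma finite_setOf_isCorePath : {p | IsCorePath G p}.Finite := by
  classical
  exact Set.Finite.of_finite_image (((finite_toSet _).image _).subset
    (mapsTo_take_two_setOf_isCorePath G).image_subset) (injOn_take_two_setOf_isCorePath G)

lemma ncard_setOf_isCorePath_le [DecidableRel (baseGraph G).Adj] :
    {p | IsCorePath G p}.ncard ≤
      ∑ v with 3 ≤ (baseGraph G).degree v, (baseGraph G).degree v :=
  calc {p | IsCorePath G p}.ncard
      ≤ ((fun x : (_ : V) × V => [x.1, x.2]) ''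
          ↑(({v | 3 ≤ (baseGraph G).degree v} : Finset V).sigma
            ((baseGraph G).neighborFinset ·))).ncard :=
        Set.ncard_le_ncard_of_injOn _ (mapsTo_take_two_setOf_isCorePath G)
          (injOn_take_two_setOf_isCorePath G) ((finite_toSet _).image _)
    _ ≤ _ := Set.ncard_image_le (finite_toSet _)
    _ = _ := by
      rw [Set.ncard_coe_finset, card_sigma]
      simp only [SimpleGraph.card_neighborFinset_eq_degree]

end Counting

lemma exists_ncard_eq_fen_isAcyclic_deleteEdges (G : SimpleGraph V) :
    ∃ F : Set (Sym2 V), F.ncard = fen G ∧ (G.deleteEdges F).IsAcyclic := by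
  have hne : {k | ∃ F : Set (Sym2 V), F ⊆ G.edgeSet ∧ F.ncard = k ∧
      (G.deleteEdges F).IsAcyclic}.Nonempty := ⟨_, G.edgeSet, subset_rfl, rfl, by simp⟩
  obtain ⟨F, -, hF⟩ := Nat.sInf_mem hne
  exact ⟨F, hF⟩

/-- Let `G` be an undirected graph with feedback edge set
number `fen G ≥ 1`. Then the base graph of `G` has at most `2 fen G - 2` core
vertices and at most `3 fen G - 3` core paths (core paths being counted up to
reversal). -/
theorem coreVertices_and_corePaths_bound [Fintype V] (G : SimpleGraph V)
    (hfen : 1 ≤ fen G) :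
    {v | IsCoreVertex G v}.ncard ≤ 2 * fen G - 2 ∧
    {s : Set (List V) | ∃ p, IsCorePath G p ∧ s = {p, p.reverse}}.ncard ≤
      3 * fen G - 3 := by
  classical
  obtain ⟨F, hFcard, hF⟩ := exists_ncard_eq_fen_isAcyclic_deleteEdges G
  obtain ⟨hcore, hsum⟩ := SimpleGraph.card_le_and_sum_degree_le_of_isAcyclic_deleteEdges
    (degree_baseGraph_ne_one G) (hF.anti (SimpleGraph.deleteEdges_mono (baseGraph_le G)))
    (hFcard ▸ hfen)
  have hcoreVertices := ncard_setOf_isCoreVertex G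
  have hcorePaths : {p | IsCorePath G p}.ncard =
      2 * {s : Set (List V) | ∃ p, IsCorePath G p ∧ s = {p, p.reverse}}.ncard :=
    Set.ncard_eq_two_mul_ncard_setOf_pair (finite_setOf_isCorePath G) (fun _ hp => hp.reverse)
      (fun p _ => p.reverse_reverse) (fun _ hp => hp.reverse_ne)
  have := ncard_setOf_isCorePath_le G
  omega

end GeoPaper
end
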